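/- arXiv:2209.14428 — 3 statements merged into one kernel-verified Lean document; each statement's English description precedes it below -/
import Mathlib

section
/- Let Q_k be the polynomials with generating function (1/(1-t)) cosh(√x log((1+√t)/(1-√t))) and let M_n be the Mittag-Leffler polynomials with generating function ∑_n M_n(x) t^n = exp(x log((1+t)/(1-t))). Then Q_k(x) = ∑_{j=0}^k M_{2j}(√x) for every k ≥ 0. -/
/-!
Substituting `t ↦ t²` turns `log((1+√t)/(1-√t)) = √t·S(t)` into `log((1+t)/(1-t)) = t·S(t²)`,
so the even powers of the Mittag-Leffler logarithm are `L^{2n} = (t S(t)²)^n` expanded by `t ↦ t²`.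
Hence the even-index terms `x^{2n} L^{2n}/(2n)!` of `exp(x L)` are exactly the cosh terms
`x^n (t S²)^n/(2n)!` with `x ↦ x²` and `t ↦ t²`, while the odd powers of `L` are odd series and do
not contribute to even coefficients. Reading off the coefficient of `t^{2j}` gives
`M_{2j}(x) = [t^j] cosh(x log((1+√t)/(1-√t)))`, and multiplying by `1/(1-t)` sums over `j ≤ k`.
-/

/-- The power series `S(t) = ∑ 2 t^m/(2m+1)`, so that
`log((1+√t)/(1-√t)) = √t · S(t)`. -/
noncomputable def Sser : PowerSeries (Polynomial ℚ) :=
  PowerSeries.mk fun m => Polynomial.C (2 / (2 * (m : ℚ) + 1))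

/-- The geometric series `1/(1-t)`. -/
noncomputable def geomSer : PowerSeries (Polynomial ℚ) :=
  PowerSeries.mk fun _ => (1 : Polynomial ℚ)

/-- The `n`-th term `x^n (t·S(t)²)^n / (2n)!` in the expansion of
`cosh(√x log((1+√t)/(1-√t)))`. -/
noncomputable def coshTerm (n : ℕ) : PowerSeries (Polynomial ℚ) :=
  PowerSeries.C (R := Polynomial ℚ)
      (Polynomial.C ((Nat.factorial (2 * n) : ℚ)⁻¹) * Polynomial.X ^ n) *
    (PowerSeries.X * Sser ^ 2) ^ n

/-- The polynomial `Q_k`, the coefficient of `t^k` in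
`(1/(1-t)) cosh(√x log((1+√t)/(1-√t)))`.  (Terms `coshTerm n` with `n > k`
have `t`-order greater than `k`, so the truncated sum suffices.) -/
noncomputable def Qpoly (k : ℕ) : Polynomial ℚ :=
  PowerSeries.coeff (R := Polynomial ℚ) k
    (geomSer * ∑ n ∈ Finset.range (k + 1), coshTerm n)

/-- The power series `log((1+t)/(1-t)) = ∑_{m odd} 2 t^m/m`. -/
noncomputable def Lser : PowerSeries (Polynomial ℚ) :=
  PowerSeries.mk fun m => if Odd m then Polynomial.C (2 / (m : ℚ)) else 0

/-- The `j`-th term `x^j log((1+t)/(1-t))^j / j!` in the expansion of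
`((1+t)/(1-t))^x = exp(x log((1+t)/(1-t)))`. -/
noncomputable def mlTerm (j : ℕ) : PowerSeries (Polynomial ℚ) :=
  PowerSeries.C (R := Polynomial ℚ)
      (Polynomial.C ((Nat.factorial j : ℚ)⁻¹) * Polynomial.X ^ j) * Lser ^ j

/-- The Mittag-Leffler polynomial `M_n`, the coefficient of `t^n` in
`((1+t)/(1-t))^x`.  (Terms `mlTerm j` with `j > n` have `t`-order greater
than `n`, so the truncated sum suffices.) -/
noncomputable def ML (n : ℕ) : Polynomial ℚ :=
  PowerSeries.coeff (R := Polynomial ℚ) n (∑ j ∈ Finset.range (n + 1), mlTerm j)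

open PowerSeries Finset

theorem Finset.sum_range_two_mul {M : Type*} [AddCommMonoid M] (f : ℕ → M) (N : ℕ) :
    ∑ m ∈ range (2 * N), f m = ∑ n ∈ range N, (f (2 * n) + f (2 * n + 1)) := by
  induction N with
  | zero => simp
  | succ N ih => rw [mul_add, mul_one, sum_range_succ, sum_range_succ, sum_range_succ, ih, add_assoc]

theorem PowerSeries.coeff_sum_range_eq_of_X_pow_dvd {R : Type*} [CommSemiring R] {F : ℕ → R⟦X⟧}
    (hF : ∀ n, X ^ n ∣ F n) {j N : ℕ} (hj : j < N) :
    coeff j (∑ n ∈ range N, F n) = coeff j (∑ n ∈ range (j + 1), F n) := by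
  rw [map_sum, map_sum]
  refine (sum_subset (range_subset_range.2 hj) fun n _ hn => ?_).symm
  exact X_pow_dvd_iff.1 (hF n) j (by simpa using hn)

theorem PowerSeries.coeff_two_mul_X_mul_expand_two {R : Type*} [CommRing R] (f : R⟦X⟧) (j : ℕ) :
    coeff (2 * j) (X * expand 2 two_ne_zero f) = 0 := by
  cases j with
  | zero => simp
  | succ j =>
    rw [show 2 * (j + 1) = (2 * j + 1) + 1 by ring, coeff_succ_X_mul,
      coeff_expand_of_not_dvd _ _ _ (by omega)]

theorem coeff_geomSer_mul (F : PowerSeries (Polynomial ℚ)) (k : ℕ) :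
    coeff k (geomSer * F) = ∑ j ∈ range (k + 1), coeff j F := by
  rw [mul_comm, coeff_mul, Nat.sum_antidiagonal_eq_sum_range_succ_mk]
  simp [geomSer]

theorem Lser_eq_X_mul_expand_Sser : Lser = X * expand 2 two_ne_zero Sser := by
  ext (_ | n)
  · simp [Lser]
  · rw [coeff_succ_X_mul, coeff_expand]
    rcases Nat.even_or_odd n with ⟨m, rfl⟩ | ⟨m, rfl⟩
    · simp only [Lser, Sser, coeff_mk, ← two_mul, Nat.dvd_mul_right, if_true,
        Nat.mul_div_cancel_left _ two_pos, show Odd (2 * m + 1) from odd_two_mul_add_one m]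
      push_cast
      ring_nf
    · simp only [Lser, coeff_mk]
      rw [if_neg (by rw [Nat.not_odd_iff_even]; exact ⟨m + 1, by ring⟩),
        if_neg (by omega)]

theorem Lser_sq : Lser ^ 2 = expand 2 two_ne_zero (X * Sser ^ 2) := by
  rw [Lser_eq_X_mul_expand_Sser, map_mul, map_pow, expand_X]
  ring

theorem X_pow_dvd_coshTerm (n : ℕ) : X ^ n ∣ coshTerm n := by
  rw [coshTerm, mul_pow]
  exact dvd_mul_of_dvd_right (dvd_mul_right _ _) _

theorem X_pow_dvd_mlTerm (n : ℕ) : X ^ n ∣ mlTerm n := by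
  rw [mlTerm, Lser_eq_X_mul_expand_Sser, mul_pow]
  exact dvd_mul_of_dvd_right (dvd_mul_right _ _) _

theorem coeff_two_mul_mlTerm_odd (j n : ℕ) : coeff (2 * j) (mlTerm (2 * n + 1)) = 0 := by
  have hL : Lser ^ (2 * n + 1) = X * expand 2 two_ne_zero ((X * Sser ^ 2) ^ n * Sser) := by
    rw [pow_succ, pow_mul, Lser_sq, Lser_eq_X_mul_expand_Sser, ← map_pow, mul_left_comm,
      ← map_mul]
  rw [mlTerm, hL, coeff_C_mul, coeff_two_mul_X_mul_expand_two, mul_zero]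

theorem map_expand_Sser :
    map (Polynomial.expand ℚ 2 : Polynomial ℚ →+* Polynomial ℚ) Sser = Sser := by
  ext n
  simp [Sser]

theorem expand_map_expand_coshTerm (n : ℕ) :
    expand 2 two_ne_zero (map (Polynomial.expand ℚ 2 : Polynomial ℚ →+* Polynomial ℚ)
      (coshTerm n)) = mlTerm (2 * n) := by
  have hX : map (Polynomial.expand ℚ 2 : Polynomial ℚ →+* Polynomial ℚ) (X * Sser ^ 2) =
      X * Sser ^ 2 := by
    rw [map_mul, map_X, map_pow, map_expand_Sser]
  rw [coshTerm, mlTerm, map_mul, map_pow, hX, map_mul, map_pow, ← Lser_sq, ← pow_mul, map_C,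
    expand_C]
  simp [pow_mul]

theorem ML_two_mul (j : ℕ) :
    ML (2 * j) = Polynomial.expand ℚ 2 (coeff j (∑ n ∈ range (j + 1), coshTerm n)) := by
  rw [ML, ← coeff_sum_range_eq_of_X_pow_dvd X_pow_dvd_mlTerm (by omega : 2 * j < 2 * (j + 1)),
    sum_range_two_mul, map_sum, map_sum, map_sum]
  refine sum_congr rfl fun n _ => ?_
  rw [map_add, coeff_two_mul_mlTerm_odd, add_zero, ← expand_map_expand_coshTerm,
    coeff_expand_mul, coeff_map]
  rfl

/-- `Q_k(x) = ∑_{j=0}^k M_{2j}(√x)`, stated equivalently (since each `M_{2j}`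
is an even polynomial) as `Q_k(x²) = ∑_{j=0}^k M_{2j}(x)`. -/
theorem stmt7 (k : ℕ) :
    (Qpoly k).comp (Polynomial.X ^ 2) = ∑ j ∈ Finset.range (k + 1), ML (2 * j) := by
  rw [← Polynomial.expand_eq_comp_X_pow, Qpoly, coeff_geomSer_mul, map_sum]
  refine sum_congr rfl fun j hj => ?_
  rw [coeff_sum_range_eq_of_X_pow_dvd X_pow_dvd_coshTerm (mem_range.1 hj), ML_two_mul]
end

section
/- Let Q_k be the polynomials with generating function Φ(x,t) = (1/(1-t)) cosh(√x log((1+√t)/(1-√t))). Then for every k ≥ 0, the dilatation operator satisfies x Q_k'(x) = k Q_k(x) - ∑_{m=1}^{k} [(2k+1)/((2m-1)(2m+1))] Q_{k-m}(x). -/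
/-!
Writing `√t · S(t) = log((1+√t)/(1-√t))`, we have `Q_k = ∑_n x^n/(2n)! · [t^k] F_n` with
`F_n = t^n S^{2n}/(1-t)`. The dilatation `x d/dx` multiplies `x^n` by `n`, so the theorem is, for
each `n`, the identity `(k - n) [t^k] F_n = (2k+1) [t^k] (U F_n)` with
`U = ∑_{m ≥ 1} t^m/((2m-1)(2m+1))`, i.e. `θ F_n = n F_n + 2 θ(U F_n) + U F_n` for `θ = t d/dt`.
That identity follows from the logarithmic derivative of `F_n` and the two relations
`S + 2 θ S = 2/(1-t)` and `(1-t) S = 2 - 4U`, both checked coefficientwise.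
-/

open PowerSeries

theorem PowerSeries.coeff_natCast_mul {R : Type*} [CommSemiring R] (n : ℕ) (f : R⟦X⟧) (k : ℕ) :
    coeff k ((n : R⟦X⟧) * f) = n * coeff k f := by
  rw [← map_natCast (C (R := R)), coeff_C_mul]

theorem PowerSeries.coeff_ofNat_mul {R : Type*} [CommSemiring R] (n : ℕ) [n.AtLeastTwo]
    (f : R⟦X⟧) (k : ℕ) : coeff k ((OfNat.ofNat n : R⟦X⟧) * f) = OfNat.ofNat n * coeff k f := by
  rw [← map_ofNat (C (R := R)), coeff_C_mul]

theorem PowerSeries.coeff_X_mul_derivative {R : Type*} [CommSemiring R] (f : R⟦X⟧) (k : ℕ) :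
    coeff k (X * d⁄dX R f) = k * coeff k f := by
  cases k with
  | zero => simp
  | succ j => rw [coeff_succ_X_mul, coeff_derivative]; push_cast; ring

theorem PowerSeries.coeff_mk_mul_of_eq_zero {R : Type*} [CommSemiring R] (w : ℕ → R) (hw : w 0 = 0)
    (f : R⟦X⟧) (k : ℕ) :
    coeff k (mk w * f) = ∑ m ∈ Finset.Icc 1 k, w m * coeff (k - m) f := by
  rw [coeff_mul, Finset.Nat.sum_antidiagonal_eq_sum_range_succ_mk, Nat.range_succ_eq_Icc_zero,
    ← Finset.insert_Icc_add_one_left_eq_Icc k.zero_le, Finset.sum_insert (by simp)]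
  simp [hw]

theorem PowerSeries.derivative_mk_one {R : Type*} [CommRing R] :
    d⁄dX R (mk 1) = mk 1 ^ 2 := by
  have h := congrArg (d⁄dX R) (mk_one_mul_one_sub_eq_one R)
  rw [Derivation.leibniz, map_sub, derivative_X, Derivation.map_one_eq_zero, smul_eq_mul,
    smul_eq_mul] at h
  linear_combination (mk 1) * h - d⁄dX R (mk 1) * mk_one_mul_one_sub_eq_one R

theorem Polynomial.coeff_X_mul_derivative {R : Type*} [CommSemiring R] (p : Polynomial R) (n : ℕ) :
    (Polynomial.X * Polynomial.derivative p).coeff n = n * p.coeff n := by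
  cases n with
  | zero => simp
  | succ j => rw [Polynomial.coeff_X_mul, Polynomial.coeff_derivative]; push_cast; ring

noncomputable def sSeries : ℚ⟦X⟧ := mk fun m => 2 / (2 * (m : ℚ) + 1)

noncomputable def uSeries : ℚ⟦X⟧ :=
  mk fun m => if m = 0 then 0 else 1 / ((2 * (m : ℚ) - 1) * (2 * (m : ℚ) + 1))

theorem sSeries_add_two_mul_X_mul_derivative :
    sSeries + 2 * (X * d⁄dX ℚ sSeries) = 2 * mk 1 := by
  ext k
  rw [map_add, coeff_ofNat_mul, coeff_ofNat_mul, coeff_X_mul_derivative]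
  simp only [sSeries, coeff_mk, Pi.one_apply]
  field_simp
  ring

theorem one_sub_X_mul_sSeries : (1 - X) * sSeries = 2 - 4 * uSeries := by
  ext k
  rw [sub_mul, one_mul, map_sub, map_sub, coeff_ofNat_mul, ← map_ofNat C, coeff_C]
  cases k with
  | zero => simp [sSeries, uSeries]
  | succ j =>
    have hj : (2 * (j : ℚ) + 1) ≠ 0 := by positivity
    have hj' : (2 * (j : ℚ) + 3) ≠ 0 := by positivity
    simp only [coeff_succ_X_mul, sSeries, uSeries, coeff_mk, Nat.succ_ne_zero, if_false]
    rw [show 2 * ((j + 1 : ℕ) : ℚ) - 1 = 2 * j + 1 by push_cast; ring,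
      show 2 * ((j + 1 : ℕ) : ℚ) + 1 = 2 * j + 3 by push_cast; ring]
    field_simp
    ring

theorem X_mul_derivative_uSeries : 8 * (X * d⁄dX ℚ uSeries) = (1 + X) * sSeries - 2 := by
  have h := congrArg (fun f => X * d⁄dX ℚ f) one_sub_X_mul_sSeries
  simp only [Derivation.leibniz, map_sub, derivative_X, Derivation.map_one_eq_zero, smul_eq_mul,
    ← map_ofNat C, derivative_C] at h
  rw [map_ofNat C 4] at h
  linear_combination 2 * h - (1 - X) * sSeries_add_two_mul_X_mul_derivative -
    2 * mk_one_mul_one_sub_eq_one ℚ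

noncomputable def fSeries (n : ℕ) : ℚ⟦X⟧ := X ^ n * sSeries ^ (2 * n) * mk 1

-- Since `F_{n+1} = t S² F_n` and `(1-t)(S + 2θS) = 2`, passing to `n + 1` raises `2n` by `2`.
theorem one_sub_X_mul_sSeries_mul_X_mul_derivative_fSeries (n : ℕ) :
    (1 - X) * sSeries * (X * d⁄dX ℚ (fSeries n)) =
      2 * (n : ℚ⟦X⟧) * fSeries n + X * sSeries * fSeries n := by
  induction n with
  | zero =>
    simp only [fSeries, pow_zero, mul_zero, one_mul, derivative_mk_one, Nat.cast_zero]
    linear_combination (X * sSeries * mk 1) * mk_one_mul_one_sub_eq_one ℚ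
  | succ n ih =>
    have hF : fSeries (n + 1) = X * sSeries ^ 2 * fSeries n := by simp only [fSeries]; ring
    rw [hF, Derivation.leibniz, Derivation.leibniz, Derivation.leibniz_pow, derivative_X]
    simp only [smul_eq_mul]
    push_cast
    linear_combination (X * sSeries ^ 2) * ih
      + (X * sSeries ^ 2 * fSeries n * (1 - X)) * sSeries_add_two_mul_X_mul_derivative
      + (2 * X * sSeries ^ 2 * fSeries n) * mk_one_mul_one_sub_eq_one ℚ

theorem X_mul_derivative_fSeries (n : ℕ) :
    X * d⁄dX ℚ (fSeries n) = (n : ℚ⟦X⟧) * fSeries n + 2 * (X * d⁄dX ℚ (uSeries * fSeries n)) +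
      uSeries * fSeries n := by
  have h4 : (4 : ℚ⟦X⟧) ≠ 0 := by
    rw [← map_ofNat C]; exact (map_ne_zero_iff _ C_injective).2 four_ne_zero
  refine mul_left_cancel₀ h4 ?_
  rw [Derivation.leibniz, smul_eq_mul, smul_eq_mul]
  linear_combination 2 * one_sub_X_mul_sSeries_mul_X_mul_derivative_fSeries n
    - (2 * (X * d⁄dX ℚ (fSeries n)) + fSeries n) * one_sub_X_mul_sSeries
    - fSeries n * X_mul_derivative_uSeries

theorem coeff_uSeries_mul (f : ℚ⟦X⟧) (k : ℕ) :
    coeff k (uSeries * f) =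
      ∑ m ∈ Finset.Icc 1 k, coeff (k - m) f / ((2 * (m : ℚ) - 1) * (2 * (m : ℚ) + 1)) := by
  rw [uSeries, coeff_mk_mul_of_eq_zero _ (by simp)]
  refine Finset.sum_congr rfl fun m hm => ?_
  rw [if_neg (Nat.one_le_iff_ne_zero.1 (Finset.mem_Icc.1 hm).1), one_div_mul_eq_div]

theorem coeff_fSeries_of_lt {n k : ℕ} (h : k < n) : coeff k (fSeries n) = 0 := by
  rw [fSeries, mul_assoc, coeff_X_pow_mul', if_neg (by omega)]

theorem sub_mul_coeff_fSeries (n k : ℕ) :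
    ((k : ℚ) - n) * coeff k (fSeries n) =
      ∑ m ∈ Finset.Icc 1 k,
        (2 * (k : ℚ) + 1) / ((2 * (m : ℚ) - 1) * (2 * (m : ℚ) + 1)) * coeff (k - m) (fSeries n) := by
  have h := congrArg (coeff k) (X_mul_derivative_fSeries n)
  rw [map_add, map_add, coeff_X_mul_derivative, coeff_natCast_mul, coeff_ofNat_mul,
    coeff_X_mul_derivative, coeff_uSeries_mul] at h
  have hsum : (2 * (k : ℚ) + 1) * ∑ m ∈ Finset.Icc 1 k,
        coeff (k - m) (fSeries n) / ((2 * (m : ℚ) - 1) * (2 * (m : ℚ) + 1)) =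
      ∑ m ∈ Finset.Icc 1 k,
        (2 * (k : ℚ) + 1) / ((2 * (m : ℚ) - 1) * (2 * (m : ℚ) + 1)) * coeff (k - m) (fSeries n) := by
    rw [Finset.mul_sum]
    exact Finset.sum_congr rfl fun m _ => by ring
  linear_combination h + hsum

theorem Sser_eq_map : Sser = map Polynomial.C sSeries := by
  ext k; simp [Sser, sSeries, coeff_map]

theorem geomSer_eq_map : geomSer = map Polynomial.C (mk 1) := by
  ext k; simp [geomSer, coeff_map]

theorem geomSer_mul_coshTerm (n : ℕ) :
    geomSer * coshTerm n =
      C (Polynomial.C ((2 * n).factorial : ℚ)⁻¹ * Polynomial.X ^ n) *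
        map Polynomial.C (fSeries n) := by
  rw [coshTerm, Sser_eq_map, geomSer_eq_map, fSeries]
  simp only [map_mul, map_pow, map_X]
  ring

theorem coeff_Qpoly (k n : ℕ) :
    (Qpoly k).coeff n = ((2 * n).factorial : ℚ)⁻¹ * coeff k (fSeries n) := by
  simp only [Qpoly, Finset.mul_sum, map_sum, geomSer_mul_coshTerm, coeff_C_mul, coeff_map,
    Polynomial.finsetSum_coeff, mul_right_comm _ (Polynomial.X ^ _), ← Polynomial.C_mul,
    Polynomial.coeff_C_mul_X_pow, Finset.sum_ite_eq, Finset.mem_range]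
  split_ifs with hn
  · rfl
  · rw [coeff_fSeries_of_lt (by omega), mul_zero]

/-- The dilatation operator acting on `Q_k`:
`x Q_k'(x) = k Q_k(x) - ∑_{m=1}^k (2k+1)/((2m-1)(2m+1)) Q_{k-m}(x)`. -/
theorem stmt8 (k : ℕ) :
    Polynomial.X * Polynomial.derivative (Qpoly k) =
      (k : ℚ) • Qpoly k -
        ∑ m ∈ Finset.Icc 1 k,
          ((2 * (k : ℚ) + 1) / ((2 * (m : ℚ) - 1) * (2 * (m : ℚ) + 1))) • Qpoly (k - m) := by
  ext n
  simp only [Polynomial.coeff_X_mul_derivative, Polynomial.coeff_sub, Polynomial.coeff_smul,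
    Polynomial.finsetSum_coeff, coeff_Qpoly, smul_eq_mul,
    mul_left_comm _ ((2 * n).factorial : ℚ)⁻¹, ← Finset.mul_sum]
  linear_combination (-((2 * n).factorial : ℚ)⁻¹) * sub_mul_coeff_fSeries n k
end

section
/- Define polynomials R_n(z) by the generating function ∑_{n=0}^∞ R_n(z) t^n = (1/√t)·(1/(1-t))·4 log((1+√t)/(1-√t)) / [((1+√t)/(1-√t))^{√z} + ((1-√t)/(1+√t))^{√z} + 2]. Then R_n(0) = 2 ∑_{k=0}^n 1/(2k+1) and R_n(1) = 2/(2n+1) for every n ≥ 0. -/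
/-- The series `cosh(√z κ) = ∑_n z^n (t S(t)²)^n/(2n)!` (with `t = tanh²(κ/2)`,
`κ = log((1+√t)/(1-√t))`), defined coefficient-wise via the truncated sums. -/
noncomputable def coshSer : PowerSeries (Polynomial ℚ) :=
  PowerSeries.mk fun m =>
    PowerSeries.coeff (R := Polynomial ℚ) m (∑ n ∈ Finset.range (m + 1), coshTerm n)

/-- The denominator `((1+√t)/(1-√t))^{√z} + ((1-√t)/(1+√t))^{√z} + 2
= 2 cosh(√z κ) + 2`. -/
noncomputable def Dser : PowerSeries (Polynomial ℚ) := 2 * coshSer + 2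

/-- The constant coefficient of `Dser`, namely `4`, as a unit of `ℚ[z]`. -/
noncomputable def Dunit : (Polynomial ℚ)ˣ :=
  Units.map (Polynomial.C : ℚ →+* Polynomial ℚ).toMonoidHom (Units.mk0 (4 : ℚ) (by norm_num))

/-- The polynomial `R_n(z)`: the coefficient of `t^n` in the generating function
`(1/√t)(1/(1-t)) · 4 log((1+√t)/(1-√t)) / [((1+√t)/(1-√t))^{√z} +
((1-√t)/(1+√t))^{√z} + 2] = 4 S(t) (1/(1-t)) / Dser`. -/
noncomputable def Rn (n : ℕ) : Polynomial ℚ :=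
  PowerSeries.coeff (R := Polynomial ℚ) n
    (4 * Sser * geomSer * PowerSeries.invOfUnit Dser Dunit)

/-!
Write `κ = log((1+√t)/(1-√t)) = √t·S(t)`. At `z = 0` the denominator is `4`, so the generating
function is `S(t)/(1-t)`, whose coefficients are the partial sums of `S`. At `z = 1` the
denominator is `2 cosh κ + 2`, and `cosh κ = (1+t)/(1-t)` because `t = tanh²(κ/2)`; so it equals
`4/(1-t)` and the generating function collapses to `S(t)`.

Formally `cosh κ` is `cosh √x` with `κ² = t·S(t)²` substituted for `x`. The identity
`cosh κ = (1+t)/(1-t)` holds because both `(cosh κ, sinh κ/√t)` and `((1+t)/(1-t), 2/(1-t))`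
solve `f' = P/(1-t)`, `P + 2tP' = 2f/(1-t)`, `f(0) = 1`, a system that determines the
coefficients of `f` and `P` recursively.
-/

open PowerSeries

namespace PowerSeries

theorem eq_zero_of_forall_X_pow_dvd {R : Type*} [Semiring R] {φ : R⟦X⟧}
    (h : ∀ n, X ^ n ∣ φ) : φ = 0 := by
  ext m
  exact X_pow_dvd_iff.mp (h (m + 1)) m m.lt_succ_self

theorem coeff_mul_mk_one {R : Type*} [Semiring R] (φ : R⟦X⟧) (n : ℕ) :
    coeff n (φ * mk 1) = ∑ k ∈ Finset.range (n + 1), coeff k φ := by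
  simp [coeff_mul, Finset.Nat.sum_antidiagonal_eq_sum_range_succ_mk]

theorem derivative_mk_one_s19 {R : Type*} [CommRing R] : d⁄dX R (mk 1) = mk 1 ^ 2 := by
  have h := congrArg (d⁄dX R) (mk_one_mul_one_sub_eq_one R)
  rw [Derivation.leibniz, Derivation.map_one_eq_zero, map_sub, Derivation.map_one_eq_zero,
    derivative_X, smul_eq_mul, smul_eq_mul] at h
  calc d⁄dX R (mk 1) = d⁄dX R (mk 1) * (mk 1 * (1 - X)) := by
        rw [mk_one_mul_one_sub_eq_one, mul_one]
    _ = mk 1 ^ 2 := by linear_combination mk 1 * h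

theorem subst_ofNat {R : Type*} [CommRing R] {a : R⟦X⟧} (ha : HasSubst a) (n : ℕ)
    [n.AtLeastTwo] : subst a (ofNat(n) : R⟦X⟧) = ofNat(n) := by
  rw [← map_ofNat (algebraMap R R⟦X⟧) n, ← coe_substAlgHom ha, AlgHom.commutes]

theorem coeff_subst_X_mul {R : Type*} [CommRing R] (f b : R⟦X⟧) (m : ℕ) :
    coeff m (f.subst (X * b)) =
      ∑ d ∈ Finset.range (m + 1), coeff d f * coeff m ((X * b) ^ d) := by
  have hb : HasSubst (X * b) := HasSubst.of_constantCoeff_zero' (by simp)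
  rw [coeff_subst' hb, finsum_eq_sum_of_support_subset (s := Finset.range (m + 1))]
  · simp only [smul_eq_mul]
  · intro d hd
    rw [Function.mem_support] at hd
    rw [Finset.coe_range, Set.mem_Iio]
    by_contra hdm
    apply hd
    rw [mul_pow, X_pow_dvd_iff.mp (dvd_mul_right _ _) m (by omega), smul_zero]

section CharZero

variable {K : Type*} [Field K] [CharZero K]

theorem X_pow_succ_dvd_of_X_pow_dvd_derivative {n : ℕ} {φ : K⟦X⟧}
    (h₀ : constantCoeff φ = 0) (h : X ^ n ∣ d⁄dX K φ) : X ^ (n + 1) ∣ φ := by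
  refine X_pow_dvd_iff.mpr fun m hm => ?_
  cases m with
  | zero => rwa [coeff_zero_eq_constantCoeff_apply]
  | succ m =>
    have hcoeff := X_pow_dvd_iff.mp h m (by omega)
    rw [coeff_derivative] at hcoeff
    exact (mul_eq_zero.mp hcoeff).resolve_right (Nat.cast_add_one_ne_zero m)

theorem X_pow_dvd_of_X_pow_dvd_add_two_X_mul_derivative {n : ℕ} {φ : K⟦X⟧}
    (h : X ^ n ∣ φ + 2 * X * d⁄dX K φ) : X ^ n ∣ φ := by
  refine X_pow_dvd_iff.mpr fun m hm => ?_
  have hcoeff : coeff m (φ + 2 * X * d⁄dX K φ) = (2 * m + 1) * coeff m φ := by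
    cases m with
    | zero => simp
    | succ m =>
      rw [map_add, mul_assoc, show (2 : K⟦X⟧) = C 2 from rfl, coeff_C_mul, coeff_succ_X_mul,
        coeff_derivative]
      push_cast
      ring
  rw [X_pow_dvd_iff.mp h m hm] at hcoeff
  exact (mul_eq_zero.mp hcoeff.symm).resolve_left (by exact_mod_cast (2 * m).succ_ne_zero)

theorem eq_zero_of_derivative_eq_mul_of_add_two_X_mul_derivative_eq {g D E : K⟦X⟧}
    (h₀ : constantCoeff D = 0) (hD : d⁄dX K D = g * E)
    (hE : E + 2 * X * d⁄dX K E = 2 * g * D) : D = 0 := by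
  have hdvd : ∀ n, X ^ n ∣ D ∧ X ^ n ∣ E := by
    intro n
    induction n with
    | zero => simp
    | succ n ih =>
      have hDn : X ^ (n + 1) ∣ D :=
        X_pow_succ_dvd_of_X_pow_dvd_derivative h₀ (hD ▸ ih.2.mul_left g)
      exact ⟨hDn, X_pow_dvd_of_X_pow_dvd_add_two_X_mul_derivative (hE ▸ hDn.mul_left _)⟩
  exact eq_zero_of_forall_X_pow_dvd fun n => (hdvd n).1

variable (K) in
noncomputable def coshSqrt : K⟦X⟧ := mk fun n => ((2 * n).factorial : K)⁻¹

variable (K) in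
noncomputable def sinhSqrtDivSqrt : K⟦X⟧ := mk fun n => ((2 * n + 1).factorial : K)⁻¹

theorem two_mul_derivative_coshSqrt : 2 * d⁄dX K (coshSqrt K) = sinhSqrtDivSqrt K := by
  ext n
  have hf : ((2 * n + 1).factorial : K) ≠ 0 := Nat.cast_ne_zero.mpr (Nat.factorial_ne_zero _)
  have hn : (2 * n + 1 + 1 : K) ≠ 0 := by exact_mod_cast (2 * n + 1).succ_ne_zero
  rw [show (2 : K⟦X⟧) = C 2 from rfl, coeff_C_mul, coeff_derivative, coshSqrt, sinhSqrtDivSqrt,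
    coeff_mk, coeff_mk, show 2 * (n + 1) = (2 * n + 1) + 1 by ring, Nat.factorial_succ]
  push_cast
  field_simp
  ring

theorem sinhSqrtDivSqrt_add_two_X_mul_derivative :
    sinhSqrtDivSqrt K + 2 * X * d⁄dX K (sinhSqrtDivSqrt K) = coshSqrt K := by
  ext n
  rw [map_add, mul_assoc, show (2 : K⟦X⟧) = C 2 from rfl, coeff_C_mul]
  cases n with
  | zero => simp [coshSqrt, sinhSqrtDivSqrt]
  | succ n =>
    have hf : ((2 * (n + 1)).factorial : K) ≠ 0 := Nat.cast_ne_zero.mpr (Nat.factorial_ne_zero _)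
    have hn : (2 * (n + 1) + 1 : K) ≠ 0 := by exact_mod_cast (2 * (n + 1)).succ_ne_zero
    rw [coeff_succ_X_mul, coeff_derivative, coshSqrt, sinhSqrtDivSqrt, coeff_mk, coeff_mk,
      Nat.factorial_succ (2 * (n + 1))]
    push_cast
    field_simp
    ring

end CharZero

end PowerSeries

-- `√t · logRatioDivSqrt = κ = log((1+√t)/(1-√t))` and `logRatioSq = κ²`.
noncomputable def logRatioDivSqrt : ℚ⟦X⟧ := mk fun m => 2 / (2 * (m : ℚ) + 1)

noncomputable def logRatioSq : ℚ⟦X⟧ := X * logRatioDivSqrt ^ 2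

noncomputable def coshLogRatio : ℚ⟦X⟧ := (coshSqrt ℚ).subst logRatioSq

-- `sinh κ / √t`
noncomputable def sinhLogRatioDivSqrt : ℚ⟦X⟧ :=
  logRatioDivSqrt * (sinhSqrtDivSqrt ℚ).subst logRatioSq

-- `κ' = 1/(√t (1-t))`, multiplied by `2√t`.
theorem logRatioDivSqrt_add_two_X_mul_derivative :
    logRatioDivSqrt + 2 * X * d⁄dX ℚ logRatioDivSqrt = 2 * mk 1 := by
  ext m
  rw [map_add, mul_assoc, show (2 : ℚ⟦X⟧) = C 2 from rfl, coeff_C_mul, coeff_C_mul]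
  cases m with
  | zero => simp [logRatioDivSqrt]
  | succ m =>
    have hm : (2 * (m + 1) + 1 : ℚ) ≠ 0 := by positivity
    simp only [coeff_succ_X_mul, coeff_derivative, logRatioDivSqrt, coeff_mk, Pi.one_apply]
    push_cast
    field_simp
    ring

theorem derivative_logRatioSq : d⁄dX ℚ logRatioSq = 2 * logRatioDivSqrt * mk 1 := by
  rw [logRatioSq, Derivation.leibniz, Derivation.leibniz_pow, derivative_X, smul_eq_mul,
    smul_eq_mul, nsmul_eq_mul]
  linear_combination logRatioDivSqrt * logRatioDivSqrt_add_two_X_mul_derivative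

theorem hasSubst_logRatioSq : HasSubst logRatioSq :=
  HasSubst.of_constantCoeff_zero' (by simp [logRatioSq])

theorem coeff_coshLogRatio (m : ℕ) :
    coeff m coshLogRatio =
      ∑ n ∈ Finset.range (m + 1), ((2 * n).factorial : ℚ)⁻¹ * coeff m (logRatioSq ^ n) := by
  simp only [coshLogRatio, logRatioSq, coeff_subst_X_mul, coshSqrt, coeff_mk]

-- The two chain rules `(cosh κ)' = sinh κ · κ'` and `(sinh κ)' = cosh κ · κ'`.
theorem derivative_coshLogRatio : d⁄dX ℚ coshLogRatio = mk 1 * sinhLogRatioDivSqrt := by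
  have h := congrArg (subst logRatioSq) (two_mul_derivative_coshSqrt (K := ℚ))
  rw [subst_mul hasSubst_logRatioSq, subst_ofNat hasSubst_logRatioSq] at h
  rw [coshLogRatio, sinhLogRatioDivSqrt, derivative_subst hasSubst_logRatioSq,
    derivative_logRatioSq, ← h]
  ring

theorem sinhLogRatioDivSqrt_add_two_X_mul_derivative :
    sinhLogRatioDivSqrt + 2 * X * d⁄dX ℚ sinhLogRatioDivSqrt = 2 * mk 1 * coshLogRatio := by
  have h := congrArg (subst logRatioSq) (sinhSqrtDivSqrt_add_two_X_mul_derivative (K := ℚ))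
  rw [subst_add hasSubst_logRatioSq, subst_mul hasSubst_logRatioSq, subst_mul hasSubst_logRatioSq,
    subst_ofNat hasSubst_logRatioSq, subst_X hasSubst_logRatioSq] at h
  rw [coshLogRatio, sinhLogRatioDivSqrt, Derivation.leibniz, derivative_subst hasSubst_logRatioSq,
    derivative_logRatioSq, ← h, smul_eq_mul, smul_eq_mul]
  have hW : logRatioSq = X * logRatioDivSqrt ^ 2 := rfl
  linear_combination (sinhSqrtDivSqrt ℚ).subst logRatioSq * logRatioDivSqrt_add_two_X_mul_derivative
    - 4 * mk 1 * (d⁄dX ℚ (sinhSqrtDivSqrt ℚ)).subst logRatioSq * hW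

theorem coshLogRatio_eq : coshLogRatio = (1 + X) * mk 1 := by
  have hG := mk_one_mul_one_sub_eq_one ℚ
  have h₀ : constantCoeff (coshLogRatio - (1 + X) * mk 1) = 0 := by
    rw [← coeff_zero_eq_constantCoeff_apply, map_sub, coeff_coshLogRatio]
    simp
  have hD : d⁄dX ℚ (coshLogRatio - (1 + X) * mk 1) = mk 1 * (sinhLogRatioDivSqrt - 2 * mk 1) := by
    rw [map_sub, derivative_coshLogRatio, Derivation.leibniz, derivative_mk_one_s19, map_add,
      Derivation.map_one_eq_zero, derivative_X, smul_eq_mul, smul_eq_mul]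
    linear_combination mk 1 * hG
  have hE : sinhLogRatioDivSqrt - 2 * mk 1 + 2 * X * d⁄dX ℚ (sinhLogRatioDivSqrt - 2 * mk 1) =
      2 * mk 1 * (coshLogRatio - (1 + X) * mk 1) := by
    rw [map_sub, two_mul (mk 1 : ℚ⟦X⟧), map_add, derivative_mk_one_s19]
    linear_combination sinhLogRatioDivSqrt_add_two_X_mul_derivative + 2 * mk 1 * hG
  exact sub_eq_zero.mp (eq_zero_of_derivative_eq_mul_of_add_two_X_mul_derivative_eq h₀ hD hE)

theorem map_eval_Sser (a : ℚ) : map (Polynomial.evalRingHom a) Sser = logRatioDivSqrt := by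
  ext m
  simp [Sser, logRatioDivSqrt]

theorem map_eval_geomSer (a : ℚ) : map (Polynomial.evalRingHom a) geomSer = mk 1 := by
  ext m
  simp [geomSer]

theorem map_eval_coshTerm (a : ℚ) (n : ℕ) :
    map (Polynomial.evalRingHom a) (coshTerm n) =
      C (((2 * n).factorial : ℚ)⁻¹ * a ^ n) * logRatioSq ^ n := by
  simp [coshTerm, map_eval_Sser, logRatioSq]

theorem coeff_map_eval_coshSer (a : ℚ) (m : ℕ) :
    coeff m (map (Polynomial.evalRingHom a) coshSer) =
      ∑ n ∈ Finset.range (m + 1), ((2 * n).factorial : ℚ)⁻¹ * a ^ n * coeff m (logRatioSq ^ n) := by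
  rw [coeff_map, coshSer, coeff_mk, ← coeff_map, map_sum, map_sum]
  simp only [map_eval_coshTerm, coeff_C_mul]

theorem map_eval_zero_coshSer : map (Polynomial.evalRingHom 0) coshSer = 1 := by
  ext m
  rw [coeff_map_eval_coshSer, Finset.sum_range_succ']
  simp

theorem map_eval_one_coshSer : map (Polynomial.evalRingHom 1) coshSer = (1 + X) * mk 1 := by
  ext m
  rw [coeff_map_eval_coshSer, ← coshLogRatio_eq, coeff_coshLogRatio]
  simp

theorem constantCoeff_Dser : constantCoeff Dser = Dunit := by
  have hcosh : constantCoeff coshSer = 1 := by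
    rw [← coeff_zero_eq_constantCoeff_apply, coshSer, coeff_mk]
    simp [coshTerm]
  rw [Dser, map_add, map_mul, hcosh, map_ofNat,
    show (Dunit : Polynomial ℚ) = Polynomial.C 4 from rfl, map_ofNat Polynomial.C 4]
  norm_num

theorem map_eval_Dser_mul_map_eval_invOfUnit (a : ℚ) :
    (2 * map (Polynomial.evalRingHom a) coshSer + 2) *
      map (Polynomial.evalRingHom a) (invOfUnit Dser Dunit) = 1 := by
  rw [← map_ofNat (map (Polynomial.evalRingHom a)) 2, ← map_mul, ← map_add, ← map_mul, ← Dser,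
    mul_invOfUnit _ _ constantCoeff_Dser, map_one]

theorem eval_Rn (a : ℚ) (n : ℕ) :
    (Rn n).eval a =
      coeff n (4 * logRatioDivSqrt * mk 1 *
        map (Polynomial.evalRingHom a) (invOfUnit Dser Dunit)) := by
  rw [Rn, ← Polynomial.coe_evalRingHom, ← coeff_map]
  simp only [map_mul, map_ofNat, map_eval_Sser, map_eval_geomSer]

theorem eval_zero_Rn (n : ℕ) : (Rn n).eval 0 = coeff n (logRatioDivSqrt * mk 1) := by
  have hinv := map_eval_Dser_mul_map_eval_invOfUnit 0
  rw [map_eval_zero_coshSer] at hinv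
  rw [eval_Rn]
  congr 1
  linear_combination logRatioDivSqrt * mk 1 * hinv

theorem eval_one_Rn (n : ℕ) : (Rn n).eval 1 = coeff n logRatioDivSqrt := by
  have hinv := map_eval_Dser_mul_map_eval_invOfUnit 1
  rw [map_eval_one_coshSer] at hinv
  rw [eval_Rn]
  congr 1
  linear_combination logRatioDivSqrt * hinv +
    2 * logRatioDivSqrt * map (Polynomial.evalRingHom 1) (invOfUnit Dser Dunit) *
      mk_one_mul_one_sub_eq_one ℚ

theorem stmt19 (n : ℕ) :
    (Rn n).eval 0 = 2 * ∑ k ∈ Finset.range (n + 1), 1 / (2 * (k : ℚ) + 1) ∧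
    (Rn n).eval 1 = 2 / (2 * (n : ℚ) + 1) := by
  refine ⟨?_, ?_⟩
  · rw [eval_zero_Rn, coeff_mul_mk_one, Finset.mul_sum]
    simp only [logRatioDivSqrt, coeff_mk, mul_one_div]
  · rw [eval_one_Rn, logRatioDivSqrt, coeff_mk]
end
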